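/- Let ε be a solution of the contraction system for the Pauli grading of sl(3,ℂ) and let A ∈ H₃. Then the function ε^A defined by ε^A(u,v) = ε(uA, vA) (row-vector multiplication by A on the right) is also a solution of the contraction system for the Pauli grading of sl(3,ℂ). -/

import Mathlib

open Matrix

/-- ω = exp(2πi/3). -/
noncomputable def om3 : ℂ := Complex.exp (2 * Real.pi * Complex.I / 3)

/-- The diagonal matrix Q = diag(1, ω, ω²). -/
noncomputable def Qm3 : Matrix (Fin 3) (Fin 3) ℂ :=
  Matrix.diagonal fun j => om3 ^ (j : ℕ)

/-- The matrix P with P_{j,k} = 1 if k ≡ j + 1 (mod 3) and 0 otherwise. -/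
noncomputable def Pm3 : Matrix (Fin 3) (Fin 3) ℂ :=
  Matrix.of fun j k => if ((k : ℕ) : ZMod 3) = ((j : ℕ) : ZMod 3) + 1 then 1 else 0

/-- X_{(r,s)} = Q^r P^s for (r,s) ∈ ℤ_3 × ℤ_3. -/
noncomputable def Xm3 (u : ZMod 3 × ZMod 3) : Matrix (Fin 3) (Fin 3) ℂ :=
  Qm3 ^ u.1.val * Pm3 ^ u.2.val

/-- A symmetric function ε is a solution of the contraction system for the Pauli grading
    of sl(3,ℂ): for all i, j, k ∈ (ℤ_3 × ℤ_3) \ {(0,0)} the (rewritten) Jacobi identity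
    for the deformed bracket [X_u, X_v]_ε = ε(u,v)·⁅X_u, X_v⁆ holds. -/
def IsPauliSol3 (ε : (ZMod 3 × ZMod 3) × (ZMod 3 × ZMod 3) → ℂ) : Prop :=
  (∀ u v, ε (u, v) = ε (v, u)) ∧
    ∀ i j k : ZMod 3 × ZMod 3, i ≠ (0, 0) → j ≠ (0, 0) → k ≠ (0, 0) →
      (ε (i, j + k) * ε (j, k)) • ⁅Xm3 i, ⁅Xm3 j, Xm3 k⁆⁆ +
        (ε (k, i + j) * ε (i, j)) • ⁅Xm3 k, ⁅Xm3 i, Xm3 j⁆⁆ +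
        (ε (j, k + i) * ε (k, i)) • ⁅Xm3 j, ⁅Xm3 k, Xm3 i⁆⁆ = 0

/-- The right action of a 2×2 matrix A over ℤ₃ on a row vector v ∈ ℤ₃ × ℤ₃, v ↦ vA. -/
def actv (A : Matrix (Fin 2) (Fin 2) (ZMod 3)) (v : ZMod 3 × ZMod 3) : ZMod 3 × ZMod 3 :=
  (v.1 * A 0 0 + v.2 * A 1 0, v.1 * A 0 1 + v.2 * A 1 1)

/-!
The Pauli matrices satisfy `X_u X_v = ω^(u₂v₁) X_{u+v}`, so `⁅X_u, X_v⁆ = c(u,v) X_{u+v}` and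
each contraction equation says that the coefficient `J_ε(i,j,k)` of `X_{i+j+k} ≠ 0` vanishes.
Writing `c(u,v) = ω^(u₁v₂) (ω^σ(u,v) - 1)` with `σ(u,v) = u₂v₁ - u₁v₂` and using
`σ(uA,vA) = det A · σ(u,v)`, one gets `c(uA,vA) = ± ω^γ(u,v) c(u,v)` for a bilinear form `γ`
which, for `det A = ±1`, can be chosen symmetric. Then `γ(j,k) + γ(i,j+k)` is invariant under
permuting `i, j, k`, so `J_ε(iA,jA,kA)` is a nonzero multiple of `J_{ε^A}(i,j,k)`.
-/

theorem om3_pow_three : om3 ^ 3 = 1 := by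
  rw [om3, ← Complex.exp_nat_mul, ← Complex.exp_two_pi_mul_I]
  congr 1
  push_cast
  ring

noncomputable def omChar : AddChar (ZMod 3) ℂ := AddChar.zmodChar 3 om3_pow_three

theorem omChar_ne_zero (a : ZMod 3) : omChar a ≠ 0 := (AddChar.val_isUnit omChar a).ne_zero

theorem omChar_mul_val (a b : ZMod 3) : om3 ^ (a.val * b.val) = omChar (a * b) := by
  rw [omChar, AddChar.zmodChar_apply, ZMod.val_mul, ← pow_eq_pow_mod _ om3_pow_three]

theorem pow_mul_pow_of_mul_eq_smul {R A : Type*} [CommSemiring R] [Semiring A] [Algebra R A]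
    {a b : A} {z : R} (h : b * a = z • (a * b)) (s p : ℕ) :
    b ^ s * a ^ p = z ^ (s * p) • (a ^ p * b ^ s) := by
  have hb : ∀ n : ℕ, b * a ^ n = z ^ n • (a ^ n * b) := by
    intro n
    induction n with
    | zero => simp
    | succ n ih =>
      rw [pow_succ, ← mul_assoc, ih, smul_mul_assoc, mul_assoc, h, mul_smul_comm, smul_smul,
        ← mul_assoc, ← pow_succ, pow_succ z]
  induction s with
  | zero => simp
  | succ s ih =>
    rw [pow_succ, mul_assoc, hb, mul_smul_comm, ← mul_assoc, ih, smul_mul_assoc, smul_smul,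
      mul_assoc, ← pow_succ, ← pow_add, add_one_mul, add_comm p (s * p)]

theorem pow_val_add {M : Type*} [Monoid M] {n : ℕ} [NeZero n] {x : M} (h : x ^ n = 1)
    (a b : ZMod n) : x ^ (a + b).val = x ^ a.val * x ^ b.val := by
  rw [ZMod.val_add, ← pow_eq_pow_mod _ h, pow_add]

theorem Qm3_pow_three : Qm3 ^ 3 = 1 := by
  rw [Qm3, diagonal_pow, ← diagonal_one]
  congr 1
  funext j
  rw [Pi.pow_apply, ← pow_mul, mul_comm, pow_mul, om3_pow_three, one_pow]

theorem Pm3_pow_three : Pm3 ^ 3 = 1 := by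
  ext j k
  fin_cases j <;> fin_cases k <;>
    simp +decide [pow_succ, Pm3, mul_apply, Fin.sum_univ_three, one_apply]

theorem Pm3_mul_Qm3 : Pm3 * Qm3 = om3 • (Qm3 * Pm3) := by
  ext j k
  fin_cases j <;> fin_cases k <;>
    simp +decide [Pm3, Qm3, mul_apply, Fin.sum_univ_three, diagonal] <;>
    first | linear_combination -om3_pow_three | ring

theorem Xm3_mul (u v : ZMod 3 × ZMod 3) : Xm3 u * Xm3 v = omChar (u.2 * v.1) • Xm3 (u + v) := by
  rw [Xm3, Xm3, Xm3, mul_assoc, ← mul_assoc (Pm3 ^ _),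
    pow_mul_pow_of_mul_eq_smul Pm3_mul_Qm3, omChar_mul_val, Prod.fst_add, Prod.snd_add,
    pow_val_add Qm3_pow_three, pow_val_add Pm3_pow_three]
  simp only [smul_mul_assoc, mul_smul_comm, mul_assoc]

theorem Xm3_ne_zero (u : ZMod 3 × ZMod 3) : Xm3 u ≠ 0 :=
  have hQ : IsUnit Qm3 := IsUnit.of_pow_eq_one Qm3_pow_three three_ne_zero
  have hP : IsUnit Pm3 := IsUnit.of_pow_eq_one Pm3_pow_three three_ne_zero
  ((hQ.pow _).mul (hP.pow _)).ne_zero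

noncomputable def pauliConst (u v : ZMod 3 × ZMod 3) : ℂ := omChar (u.2 * v.1) - omChar (u.1 * v.2)

theorem lie_Xm3 (u v : ZMod 3 × ZMod 3) : ⁅Xm3 u, Xm3 v⁆ = pauliConst u v • Xm3 (u + v) := by
  rw [Ring.lie_def, Xm3_mul, Xm3_mul, add_comm v u, pauliConst, sub_smul, mul_comm v.2]

theorem lie_Xm3_lie_Xm3 (i j k : ZMod 3 × ZMod 3) :
    ⁅Xm3 i, ⁅Xm3 j, Xm3 k⁆⁆ = (pauliConst j k * pauliConst i (j + k)) • Xm3 (i + (j + k)) := by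
  rw [lie_Xm3 j k, Ring.lie_def, mul_smul_comm, smul_mul_assoc, ← smul_sub, ← Ring.lie_def,
    lie_Xm3, smul_smul]

noncomputable def jacobiScalar (ε : (ZMod 3 × ZMod 3) × (ZMod 3 × ZMod 3) → ℂ)
    (i j k : ZMod 3 × ZMod 3) : ℂ :=
  ε (i, j + k) * ε (j, k) * (pauliConst j k * pauliConst i (j + k)) +
    ε (k, i + j) * ε (i, j) * (pauliConst i j * pauliConst k (i + j)) +
    ε (j, k + i) * ε (k, i) * (pauliConst k i * pauliConst j (k + i))

theorem jacobi_Xm3 (ε : (ZMod 3 × ZMod 3) × (ZMod 3 × ZMod 3) → ℂ) (i j k : ZMod 3 × ZMod 3) :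
    (ε (i, j + k) * ε (j, k)) • ⁅Xm3 i, ⁅Xm3 j, Xm3 k⁆⁆ +
        (ε (k, i + j) * ε (i, j)) • ⁅Xm3 k, ⁅Xm3 i, Xm3 j⁆⁆ +
        (ε (j, k + i) * ε (k, i)) • ⁅Xm3 j, ⁅Xm3 k, Xm3 i⁆⁆ =
      jacobiScalar ε i j k • Xm3 (i + (j + k)) := by
  rw [lie_Xm3_lie_Xm3, lie_Xm3_lie_Xm3, lie_Xm3_lie_Xm3, show k + (i + j) = i + (j + k) by abel,
    show j + (k + i) = i + (j + k) by abel, jacobiScalar, add_smul, add_smul, smul_smul,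
    smul_smul, smul_smul]

theorem isPauliSol3_iff (ε : (ZMod 3 × ZMod 3) × (ZMod 3 × ZMod 3) → ℂ) :
    IsPauliSol3 ε ↔ (∀ u v, ε (u, v) = ε (v, u)) ∧
      ∀ i j k : ZMod 3 × ZMod 3, i ≠ (0, 0) → j ≠ (0, 0) → k ≠ (0, 0) →
        jacobiScalar ε i j k = 0 := by
  simp only [IsPauliSol3, jacobi_Xm3, smul_eq_zero, Xm3_ne_zero, or_false]

theorem jacobiScalar_comp {φ : ZMod 3 × ZMod 3 → ZMod 3 × ZMod 3}
    (hφ : ∀ u v, φ (u + v) = φ u + φ v) {γ : ZMod 3 × ZMod 3 → ZMod 3 × ZMod 3 → ZMod 3}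
    (hγ : ∀ i j k, γ j k + γ i (j + k) = γ i j + γ k (i + j)) {s : ℂ}
    (hc : ∀ u v, pauliConst (φ u) (φ v) = s * omChar (γ u v) * pauliConst u v)
    (ε : (ZMod 3 × ZMod 3) × (ZMod 3 × ZMod 3) → ℂ) (i j k : ZMod 3 × ZMod 3) :
    jacobiScalar ε (φ i) (φ j) (φ k) =
      s ^ 2 * omChar (γ j k + γ i (j + k)) * jacobiScalar (fun p => ε (φ p.1, φ p.2)) i j k := by
  have h₁ := congrArg omChar (hγ i j k)
  have h₂ := congrArg omChar (hγ j k i)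
  simp only [AddChar.map_add_eq_mul] at h₁ h₂ ⊢
  simp only [jacobiScalar, ← hφ, hc]
  linear_combination
    (-s ^ 2 * ε (φ k, φ (i + j)) * ε (φ i, φ j) * pauliConst i j * pauliConst k (i + j)) * h₁ +
    (s ^ 2 * ε (φ j, φ (k + i)) * ε (φ k, φ i) * pauliConst k i * pauliConst j (k + i)) * h₂

def pauliForm (u v : ZMod 3 × ZMod 3) : ZMod 3 := u.2 * v.1 - u.1 * v.2

theorem pauliConst_eq (u v : ZMod 3 × ZMod 3) :
    pauliConst u v = omChar (u.1 * v.2) * (omChar (pauliForm u v) - 1) := by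
  rw [pauliConst, mul_sub, mul_one, ← AddChar.map_add_eq_mul, pauliForm, add_sub_cancel]

theorem pauliForm_actv (A : Matrix (Fin 2) (Fin 2) (ZMod 3)) (u v : ZMod 3 × ZMod 3) :
    pauliForm (actv A u) (actv A v) = A.det * pauliForm u v := by
  simp only [pauliForm, actv, det_fin_two]
  ring

theorem actv_add (A : Matrix (Fin 2) (Fin 2) (ZMod 3)) (u v : ZMod 3 × ZMod 3) :
    actv A (u + v) = actv A u + actv A v := by
  simp only [actv, Prod.fst_add, Prod.snd_add, Prod.mk_add_mk, Prod.mk.injEq]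
  constructor <;> ring

theorem actv_ne_zero {A : Matrix (Fin 2) (Fin 2) (ZMod 3)} (hA : A.det ≠ 0)
    {u : ZMod 3 × ZMod 3} (hu : u ≠ (0, 0)) : actv A u ≠ (0, 0) := by
  intro h
  simp only [actv, Prod.mk.injEq] at h
  obtain ⟨h₁, h₂⟩ := h
  have e₁ : u.1 * A.det = 0 := by rw [det_fin_two]; linear_combination A 1 1 * h₁ - A 1 0 * h₂
  have e₂ : u.2 * A.det = 0 := by rw [det_fin_two]; linear_combination A 0 0 * h₂ - A 0 1 * h₁
  exact hu (Prod.ext (by simpa [hA] using e₁) (by simpa [hA] using e₂))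

def actvTwist (A : Matrix (Fin 2) (Fin 2) (ZMod 3)) (t : ZMod 3) (u v : ZMod 3 × ZMod 3) :
    ZMod 3 :=
  (actv A u).1 * (actv A v).2 - u.1 * v.2 - t * pauliForm u v

theorem actvTwist_cocycle {A : Matrix (Fin 2) (Fin 2) (ZMod 3)} {t : ZMod 3}
    (h : A.det = 1 - 2 * t) (i j k : ZMod 3 × ZMod 3) :
    actvTwist A t j k + actvTwist A t i (j + k) = actvTwist A t i j + actvTwist A t k (i + j) := by
  rw [det_fin_two] at h
  simp only [actvTwist, pauliForm, actv, Prod.fst_add, Prod.snd_add]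
  linear_combination (j.1 * k.2 - j.2 * k.1 + i.1 * k.2 - i.2 * k.1) * h

theorem pauliConst_actv_of_det_eq_one {A : Matrix (Fin 2) (Fin 2) (ZMod 3)} (h : A.det = 1)
    (u v : ZMod 3 × ZMod 3) :
    pauliConst (actv A u) (actv A v) = omChar (actvTwist A 0 u v) * pauliConst u v := by
  rw [pauliConst_eq, pauliForm_actv, h, one_mul, pauliConst_eq u v, ← mul_assoc,
    ← AddChar.map_add_eq_mul, actvTwist]
  ring_nf

theorem pauliConst_actv_of_det_eq_neg_one {A : Matrix (Fin 2) (Fin 2) (ZMod 3)}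
    (h : A.det = -1) (u v : ZMod 3 × ZMod 3) :
    pauliConst (actv A u) (actv A v) = -(omChar (actvTwist A 1 u v) * pauliConst u v) := by
  rw [pauliConst_eq, pauliConst_eq u v, pauliForm_actv, h, actvTwist, one_mul, neg_one_mul,
    AddChar.map_sub_eq_div, AddChar.map_sub_eq_div, AddChar.map_neg_eq_inv]
  have := omChar_ne_zero (pauliForm u v)
  have := omChar_ne_zero (u.1 * v.2)
  field_simp
  ring

theorem exists_pauliConst_actv {A : Matrix (Fin 2) (Fin 2) (ZMod 3)}
    (hA : A.det = 1 ∨ A.det = -1) :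
    ∃ (t : ZMod 3) (s : ℂ), A.det = 1 - 2 * t ∧ s ^ 2 = 1 ∧
      ∀ u v, pauliConst (actv A u) (actv A v) = s * omChar (actvTwist A t u v) * pauliConst u v := by
  rcases hA with h | h
  · refine ⟨0, 1, by rw [h]; ring, one_pow 2, fun u v => ?_⟩
    rw [pauliConst_actv_of_det_eq_one h, one_mul]
  · refine ⟨1, -1, by rw [h]; ring, by norm_num, fun u v => ?_⟩
    rw [pauliConst_actv_of_det_eq_neg_one h]; ring

/-- If ε is a solution of the contraction system for the Pauli grading of sl(3,ℂ) and
    A ∈ H₃ (a 2×2 matrix over ℤ₃ with determinant ±1), then ε^A(u,v) = ε(uA, vA) is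
    again a solution. -/
theorem stmt16 (ε : (ZMod 3 × ZMod 3) × (ZMod 3 × ZMod 3) → ℂ) (hε : IsPauliSol3 ε)
    (A : Matrix (Fin 2) (Fin 2) (ZMod 3)) (hA : A.det = 1 ∨ A.det = -1) :
    IsPauliSol3 (fun p => ε (actv A p.1, actv A p.2)) := by
  obtain ⟨t, s, hdet, hs, hc⟩ := exists_pauliConst_actv hA
  have hA₀ : A.det ≠ 0 := by rcases hA with h | h <;> rw [h] <;> decide
  rw [isPauliSol3_iff] at hε ⊢
  refine ⟨fun u v => hε.1 _ _, fun i j k hi hj hk => ?_⟩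
  have h := jacobiScalar_comp (actv_add A) (actvTwist_cocycle hdet) hc ε i j k
  rw [hε.2 _ _ _ (actv_ne_zero hA₀ hi) (actv_ne_zero hA₀ hj) (actv_ne_zero hA₀ hk), hs,
    one_mul] at h
  exact (mul_eq_zero.mp h.symm).resolve_left (omChar_ne_zero _)
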